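/- For every odd integer p ≥ 9 and every even integer r ≥ 2 there exists a Laurent polynomial Q_{p,r}(q,t) ∈ ℤ[q^{±1}, t^{±1}] with nonnegative coefficients such that Kh_{p,r}(q,t) = q·(1 + q²) + (1 + t q⁴) · Q_{p,r}(q,t). -/

import Mathlib

open Finset

/-- Laurent polynomials in two variables `t, q` over `ℤ`:
the index `(i, j)` records the monomial `t^i q^j`. -/
abbrev LP := AddMonoidAlgebra ℤ (ℤ × ℤ)

/-- The monomial `c · t^i q^j`. -/
noncomputable def mono (i j c : ℤ) : LP := AddMonoidAlgebra.single (i, j) c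

/-- The Khovanov Poincaré polynomial `Kh_p(q,t)` of `P(p, -(p-2), 0)` (formula (000)). -/
noncomputable def Kh (p : ℤ) : LP :=
  mono (2 - p) (5 - 2*p) 1 + mono (3 - p) (9 - 2*p) 1 + mono (4 - p) (9 - 2*p) 2
    + mono (5 - p) (11 - 2*p) 1
  + ∑ n ∈ (Finset.Icc (7 - p) (-2)).filter (fun n => Even n),
      (mono (n - 2) (2*n - 1) ((p + n - 5)/2 + 1) + mono (n - 1) (2*n - 1) ((p + n - 5)/2 + 2)
        + mono (n - 1) (2*n + 1) ((p + n - 5)/2) + mono n (2*n + 1) ((p + n - 5)/2 + 1))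
  + (mono (-2) (-1) ((p - 9)/2 + 3) + mono (-1) (-1) ((p - 9)/2 + 3)
      + mono (-1) 1 ((p - 9)/2 + 2) + mono 0 1 ((p - 9)/2 + 4))
  + (mono 0 3 ((p - 9)/2 + 4) + mono 1 3 ((p - 9)/2 + 3)
      + mono 1 5 ((p - 9)/2 + 3) + mono 2 5 ((p - 9)/2 + 4))
  + ∑ m ∈ (Finset.Icc 2 (p - 3)).filter (fun m => Even m),
      (mono m (2*m + 3) ((p - m - 3)/2 + 1) + mono (m + 1) (2*m + 3) ((p - m - 3)/2)
        + mono (m + 1) (2*m + 5) ((p - m - 3)/2 + 2) + mono (m + 2) (2*m + 5) ((p - m - 3)/2 + 1))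
  + mono p (2*p + 3) 1

/-- The Khovanov Poincaré polynomial `Torus_p(q,t)` of the torus knot `T(2,p)`. -/
noncomputable def Torus (p : ℤ) : LP :=
  mono 0 (p - 2) 1 + mono 0 p 1
    + ∑ k ∈ Finset.Icc 1 ((p - 1)/2),
        (mono (2*k) (p + 4*k - 2) 1 + mono (2*k + 1) (p + 4*k + 2) 1)

/-- The Khovanov Poincaré polynomial `Kh_{p,r}(q,t)` of `P(p, -(p-2), -r)` (formula (002)). -/
noncomputable def KhR (p r : ℤ) : LP :=
  mono r (2*r) 1 * Kh p + mono 0 1 1 + mono 0 3 1 + mono 1 3 1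
    + ∑ k ∈ Finset.Icc 1 (r/2 - 1),
        (mono (2*k) (4*k + 1) 1 + mono (2*k) (4*k + 3) 1
          + mono (2*k + 1) (4*k + 3) 1 + mono (2*k + 1) (4*k + 5) 1)
    + mono (r + 1) (2*r + 5) 1

/-- Evaluation at `q = 1, t = 1`: the sum of all coefficients. -/
noncomputable def evalOneOne (f : LP) : ℤ := f.coeff.sum fun _ c => c

/-- Evaluation at `q = 1, t = -1`. -/
noncomputable def evalOneNegOne (f : LP) : ℤ := f.coeff.sum fun ij c => c * (ij.1.negOnePow : ℤ)

/-- Substitution `t = -1`, yielding a Laurent polynomial in `q`. -/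
noncomputable def evalTNegOne (f : LP) : LaurentPolynomial ℤ :=
  f.coeff.sum fun ij c => LaurentPolynomial.C (c * (ij.1.negOnePow : ℤ)) * LaurentPolynomial.T ij.2

/-- Substitution `q ↦ q⁻¹, t = -1`, yielding a Laurent polynomial in `q`. -/
noncomputable def evalQInvTNegOne (f : LP) : LaurentPolynomial ℤ :=
  f.coeff.sum fun ij c => LaurentPolynomial.C (c * (ij.1.negOnePow : ℤ)) * LaurentPolynomial.T (-ij.2)

/-- Substitution `(q, t) ↦ (q⁻¹, t⁻¹)` on two-variable Laurent polynomials. -/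
noncomputable def inv2 (f : LP) : LP := AddMonoidAlgebra.ofCoeff (Finsupp.mapDomain (fun ij => -ij) f.coeff)

/-!
`Kh_p` is supported on the two diagonals `j - 2i ∈ {1, 3}` (for `t^i q^j`), and along each of
them its coefficients drop by one per step `(i, j) ↦ (i ± 2, j ± 4)` away from the centre: up to
finitely many monomials it is a sum of `ramp`s. Multiplying by `t q⁴` (a knight move) carries a
ramp on the lower diagonal to the upper one, where, up to its end terms, it is again a ramp of
`Kh_p`. Hence `Kh_p = q + q³ + (1 + t q⁴) Q_p` with `Q_p` a nonnegative sum of ramps; the extra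
terms of `Kh_{p,r}` pair up into knight moves in the same telescoping way.
-/

open Finset

namespace AddMonoidAlgebra

variable {R G : Type*} [Semiring R] [PartialOrder R]

theorem coeff_single_nonneg (g : G) {r : R} (hr : 0 ≤ r) (g' : G) :
    0 ≤ (single g r).coeff g' := by
  classical
  rw [coeff_single, Finsupp.single_apply]
  split_ifs
  · exact hr
  · exact le_rfl

variable [IsOrderedRing R] [AddMonoid G]

variable (R G) in
def nonnegCoeffs : Subsemiring (AddMonoidAlgebra R G) where
  carrier := {f | ∀ g, 0 ≤ f.coeff g}
  zero_mem' _ := le_rfl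
  add_mem' hf hg g := add_nonneg (hf g) (hg g)
  one_mem' := coeff_single_nonneg 0 zero_le_one
  mul_mem' {f h} hf hg g := by
    classical
    rw [coeff_mul]
    exact Finsupp.sum_nonneg fun a _ => Finsupp.sum_nonneg fun b _ => by
      split_ifs
      · exact mul_nonneg (hf a) (hg b)
      · exact le_rfl

end AddMonoidAlgebra

open AddMonoidAlgebra

section Reindex

variable {M : Type*} [AddCommMonoid M]

theorem sum_filter_even_Icc (a : ℤ) (n : ℕ) (f : ℤ → M) :
    ∑ m ∈ (Icc (2 * a) (2 * a + 2 * n)).filter Even, f m =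
      ∑ k ∈ range (n + 1), f (2 * a + 2 * k) := by
  symm
  refine sum_nbij' (fun k => 2 * a + 2 * k) (fun m => ((m - 2 * a) / 2).toNat) ?_ ?_ ?_ ?_ ?_ <;>
    intro x hx <;> simp only [mem_range, mem_filter, mem_Icc, Int.even_iff] at hx ⊢ <;> omega

theorem sum_filter_even_Icc_rev (a : ℤ) (n : ℕ) (f : ℤ → M) :
    ∑ m ∈ (Icc (2 * a - 2 * n) (2 * a)).filter Even, f m =
      ∑ k ∈ range (n + 1), f (2 * a - 2 * k) := by
  symm
  refine sum_nbij' (fun k => 2 * a - 2 * k) (fun m => ((2 * a - m) / 2).toNat) ?_ ?_ ?_ ?_ ?_ <;>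
    intro x hx <;> simp only [mem_range, mem_filter, mem_Icc, Int.even_iff] at hx ⊢ <;> omega

theorem sum_Icc_one_eq_sum_range (n : ℕ) (f : ℤ → M) :
    ∑ k ∈ Icc 1 (n : ℤ), f k = ∑ k ∈ range n, f (k + 1) := by
  symm
  refine sum_nbij' (fun k => k + 1) (fun k => (k - 1).toNat) ?_ ?_ ?_ ?_ ?_ <;>
    intro x hx <;> simp only [mem_range, mem_Icc] at hx ⊢ <;> omega

end Reindex

theorem mono_congr {i j c i' j' c' : ℤ} (hi : i = i') (hj : j = j') (hc : c = c') :
    mono i j c = mono i' j' c' := by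
  rw [hi, hj, hc]

theorem mono_mul (i j c i' j' c' : ℤ) :
    mono i j c * mono i' j' c' = mono (i + i') (j + j') (c * c') :=
  single_mul_single ..

theorem mono_add (i j c c' : ℤ) : mono i j (c + c') = mono i j c + mono i j c' :=
  single_add ..

theorem mono_zero (i j : ℤ) : mono i j 0 = 0 :=
  single_zero _

theorem mono_mem_nonnegCoeffs (i j : ℤ) {c : ℤ} (hc : 0 ≤ c) :
    mono i j c ∈ nonnegCoeffs ℤ (ℤ × ℤ) :=
  coeff_single_nonneg _ hc

noncomputable def ramp (i j c e : ℤ) (n : ℕ) : LP :=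
  ∑ k ∈ range n, mono (i + 2 * e * k) (j + 4 * e * k) (c - k)

theorem ramp_succ (i j c e : ℤ) (n : ℕ) :
    ramp i j c e (n + 1) = ramp i j c e n + mono (i + 2 * e * n) (j + 4 * e * n) (c - n) :=
  sum_range_succ ..

theorem ramp_succ' (i j c e : ℤ) (n : ℕ) :
    ramp i j c e (n + 1) = mono i j c + ramp (i + 2 * e) (j + 4 * e) (c - 1) e n := by
  rw [ramp, sum_range_succ', add_comm]
  simp only [ramp, Nat.cast_add, Nat.cast_one, Nat.cast_zero, mul_zero, add_zero, sub_zero]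
  congr 1
  refine sum_congr rfl fun k _ => ?_
  congr 1 <;> ring

theorem mono_mul_ramp (a b i j c e : ℤ) (n : ℕ) :
    mono a b 1 * ramp i j c e n = ramp (a + i) (b + j) c e n := by
  rw [ramp, mul_sum]
  refine sum_congr rfl fun k _ => ?_
  rw [mono_mul]
  exact mono_congr (by ring) (by ring) (by ring)

theorem ramp_mem_nonnegCoeffs (i j c e : ℤ) {n : ℕ} (hn : (n : ℤ) ≤ c + 1) :
    ramp i j c e n ∈ nonnegCoeffs ℤ (ℤ × ℤ) :=
  sum_mem fun k hk => mono_mem_nonnegCoeffs _ _ (by rw [mem_range] at hk; omega)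

theorem Kh_negSum_eq_ramps (p : ℤ) (s : ℕ) (hp : p = 2 * s + 9) :
    ∑ n ∈ (Icc (7 - p) (-2)).filter Even,
      (mono (n - 2) (2*n - 1) ((p + n - 5)/2 + 1) + mono (n - 1) (2*n - 1) ((p + n - 5)/2 + 2)
        + mono (n - 1) (2*n + 1) ((p + n - 5)/2) + mono n (2*n + 1) ((p + n - 5)/2 + 1)) =
      ramp (-4) (-5) (s + 2) (-1) (s + 1) + ramp (-3) (-5) (s + 3) (-1) (s + 1)
        + ramp (-3) (-3) (s + 1) (-1) (s + 1) + ramp (-2) (-3) (s + 2) (-1) (s + 1) := by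
  rw [show Icc (7 - p) (-2) = Icc (2 * (-1) - 2 * (s : ℤ)) (2 * (-1)) by congr 1; omega,
    sum_filter_even_Icc_rev]
  simp only [ramp, ← sum_add_distrib]
  refine sum_congr rfl fun k _ => ?_
  refine congrArg₂ _ (congrArg₂ _ (congrArg₂ _ ?_ ?_) ?_) ?_ <;>
    exact mono_congr (by omega) (by omega) (by omega)

theorem Kh_posSum_eq_ramps (p : ℤ) (s : ℕ) (hp : p = 2 * s + 9) :
    ∑ m ∈ (Icc 2 (p - 3)).filter Even,
      (mono m (2*m + 3) ((p - m - 3)/2 + 1) + mono (m + 1) (2*m + 3) ((p - m - 3)/2)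
        + mono (m + 1) (2*m + 5) ((p - m - 3)/2 + 2) + mono (m + 2) (2*m + 5) ((p - m - 3)/2 + 1)) =
      ramp 2 7 (s + 3) 1 (s + 3) + ramp 3 7 (s + 2) 1 (s + 3)
        + ramp 3 9 (s + 4) 1 (s + 3) + ramp 4 9 (s + 3) 1 (s + 3) := by
  rw [show Icc 2 (p - 3) = Icc (2 * 1) (2 * 1 + 2 * ((s + 2 : ℕ) : ℤ)) by
      congr 1; push_cast; omega, sum_filter_even_Icc]
  simp only [ramp, ← sum_add_distrib]
  refine sum_congr rfl fun k _ => ?_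
  refine congrArg₂ _ (congrArg₂ _ (congrArg₂ _ ?_ ?_) ?_) ?_ <;>
    exact mono_congr (by omega) (by omega) (by omega)

theorem Kh_eq_ramps (s : ℕ) :
    Kh (2 * s + 9) = mono 0 1 1 + mono 0 3 1
      + mono (-2 * s - 7) (-4 * s - 13) 1 + mono (-2 * s - 6) (-4 * s - 9) 1
      + mono (-2 * s - 5) (-4 * s - 9) 2 + mono (-2 * s - 4) (-4 * s - 7) 1
      + ramp (-4) (-5) (s + 2) (-1) (s + 1) + ramp (-3) (-5) (s + 3) (-1) (s + 1)
      + ramp (-3) (-3) (s + 1) (-1) (s + 1) + ramp (-2) (-3) (s + 2) (-1) (s + 1)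
      + mono (-2) (-1) (s + 3) + mono (-1) (-1) (s + 3) + mono (-1) 1 (s + 2) + mono 0 1 (s + 3)
      + mono 0 3 (s + 3) + mono 1 3 (s + 3) + mono 1 5 (s + 3) + mono 2 5 (s + 4)
      + ramp 2 7 (s + 3) 1 (s + 3) + ramp 3 7 (s + 2) 1 (s + 2)
      + ramp 3 9 (s + 4) 1 (s + 3) + ramp 4 9 (s + 3) 1 (s + 3)
      + mono (2 * s + 9) (4 * s + 21) 1 := by
  rw [Kh, Kh_negSum_eq_ramps _ s rfl, Kh_posSum_eq_ramps _ s rfl,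
    show (2 * (s : ℤ) + 9 - 9) / 2 = s by omega, show (s : ℤ) + 4 = s + 3 + 1 by ring,
    mono_add 0 1, mono_add 0 3, ramp_succ 3 7 _ _ (s + 2),
    show (s : ℤ) + 2 - ((s + 2 : ℕ) : ℤ) = 0 by push_cast; ring, mono_zero, add_zero]
  ring_nf

noncomputable def khQuot (s : ℕ) : LP :=
  ramp (-3) (-5) (s + 3) (-1) (s + 3) + ramp (-2) (-3) (s + 2) (-1) (s + 2)
    + mono (-1) (-1) (s + 3) + mono 0 1 (s + 3) + mono 1 3 (s + 3)
    + ramp 2 5 (s + 4) 1 (s + 4) + ramp 3 7 (s + 2) 1 (s + 2)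

theorem khQuot_mem_nonnegCoeffs (s : ℕ) : khQuot s ∈ nonnegCoeffs ℤ (ℤ × ℤ) := by
  unfold khQuot
  repeat' apply add_mem
  all_goals first
    | exact ramp_mem_nonnegCoeffs _ _ _ _ (by push_cast; omega)
    | exact mono_mem_nonnegCoeffs _ _ (by omega)

theorem Kh_eq_add_mul_khQuot (s : ℕ) :
    Kh (2 * s + 9) = mono 0 1 1 + mono 0 3 1 + (1 + mono 1 4 1) * khQuot s := by
  rw [Kh_eq_ramps, khQuot]
  simp only [mul_add, add_mul, one_mul, mono_mul, mono_mul_ramp, Int.reduceAdd, Int.reduceNeg]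
  -- Peel the first term off the ramps that start next to the centre; afterwards both sides
  -- consist of the same ramps, and trimming all of them to length `s` leaves monomials only.
  rw [ramp_succ' (-2) (-1), ramp_succ' (-1) 1, ramp_succ' 2 5, ramp_succ' 2 7]
  simp only [ramp_succ]
  push_cast
  ring_nf

noncomputable def tailQuot (w : ℕ) : LP :=
  ∑ k ∈ range (w + 1), (mono (2 * k + 1) (4 * k + 3) 1 + mono (2 * k + 2) (4 * k + 5) 1)

theorem tailQuot_mem_nonnegCoeffs (w : ℕ) : tailQuot w ∈ nonnegCoeffs ℤ (ℤ × ℤ) :=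
  sum_mem fun _ _ =>
    add_mem (mono_mem_nonnegCoeffs _ _ zero_le_one) (mono_mem_nonnegCoeffs _ _ zero_le_one)

theorem KhR_tail_eq (w : ℕ) :
    mono (2 * w + 2) (4 * w + 4) 1 * (mono 0 1 1 + mono 0 3 1) + mono 1 3 1
      + ∑ k ∈ Icc 1 (w : ℤ), (mono (2*k) (4*k + 1) 1 + mono (2*k) (4*k + 3) 1
          + mono (2*k + 1) (4*k + 3) 1 + mono (2*k + 1) (4*k + 5) 1)
      + mono (2 * w + 3) (4 * w + 9) 1 = (1 + mono 1 4 1) * tailQuot w := by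
  rw [tailQuot, add_mul, one_mul, mul_sum, sum_Icc_one_eq_sum_range]
  simp only [mul_add, mono_mul, sum_add_distrib]
  rw [sum_range_succ' (fun k : ℕ => mono (2 * k + 1) (4 * k + 3) 1)]
  simp only [sum_range_succ]
  push_cast
  ring_nf

/-- For odd `p ≥ 9` and even `r ≥ 2` there is `Q_{p,r} ∈ ℤ[q^{±1}, t^{±1}]` with nonnegative
coefficients such that `Kh_{p,r}(q,t) = q·(1 + q²) + (1 + t q⁴) · Q_{p,r}(q,t)`. -/
theorem stmt_14 (p r : ℤ) (hp : Odd p) (hp9 : 9 ≤ p) (hr : Even r) (hr2 : 2 ≤ r) :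
    ∃ Q : LP, (∀ ij : ℤ × ℤ, 0 ≤ Q.coeff ij) ∧
      KhR p r = mono 0 1 1 + mono 0 3 1 + (1 + mono 1 4 1) * Q := by
  obtain ⟨s, rfl⟩ : ∃ s : ℕ, p = 2 * s + 9 :=
    ⟨((p - 9) / 2).toNat, by obtain ⟨a, rfl⟩ := hp; omega⟩
  obtain ⟨w, rfl⟩ : ∃ w : ℕ, r = 2 * w + 2 :=
    ⟨((r - 2) / 2).toNat, by obtain ⟨b, rfl⟩ := hr; omega⟩
  refine ⟨mono (2 * w + 2) (4 * w + 4) 1 * khQuot s + tailQuot w,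
    add_mem (mul_mem (mono_mem_nonnegCoeffs _ _ zero_le_one) (khQuot_mem_nonnegCoeffs s))
      (tailQuot_mem_nonnegCoeffs w), ?_⟩
  rw [KhR, Kh_eq_add_mul_khQuot, show (2 * (w : ℤ) + 2) / 2 - 1 = w by omega,
    show 2 * (2 * (w : ℤ) + 2) = 4 * w + 4 by ring,
    show 2 * (w : ℤ) + 2 + 1 = 2 * w + 3 by ring, show 4 * (w : ℤ) + 4 + 5 = 4 * w + 9 by ring,
    mul_add (1 + mono 1 4 1), ← KhR_tail_eq]
  ring
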